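/- arXiv:2602.10296 — 2 statements merged into one kernel-verified Lean document; each statement's English description precedes it below -/
import Mathlib

section
/- Let α, β ∈ ℝ^m with α ≤ β coordinatewise, ε ≥ 0, and let f : B(α,β) → B(α,β,±ε) be a continuous nonexpansive map with respect to the ℓ∞-norm. Then there exists x ∈ B(α,β) with ‖f(x) - x‖∞ ≤ ε. -/
/-!
Truncating `f` coordinatewise into the box, `x ↦ f x ⊓ β ⊔ α`, gives a nonexpansive self-map of the
box, and a fixed point of the truncation is an `ε`-fixed point of `f` since `f` overshoots the box
by at most `ε` in each coordinate. Instead of Brouwer's theorem we use that a nonexpansive self-map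
`g` of a compact convex set `S` has a fixed point: the contractions `a + (1 - s) • (g - a)` have
fixed points which are `s • diam S`-fixed points of `g`, and `‖g x - x‖` attains its infimum on `S`.
-/

open Set Function Filter Topology

instance Pi.hasSolidNorm {ι : Type*} [Fintype ι] {π : ι → Type*}
    [∀ i, NormedAddCommGroup (π i)] [∀ i, Lattice (π i)] [∀ i, HasSolidNorm (π i)] :
    HasSolidNorm (∀ i, π i) where
  solid _ y h := (pi_norm_le_iff_of_nonneg (norm_nonneg y)).2 fun i =>
    (norm_le_norm_of_abs_le_abs (h i)).trans (norm_le_pi_norm y i)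

section NonexpansiveFixedPoint

variable {E : Type*} [NormedAddCommGroup E] [NormedSpace ℝ E] {S : Set E} {g : E → E}

theorem exists_norm_sub_le_mul_diam_of_lipschitzOnWith_one (hc : IsComplete S)
    (hb : Bornology.IsBounded S) (hconv : Convex ℝ S) (hg : MapsTo g S S)
    (hlip : LipschitzOnWith 1 g S) {a : E} (ha : a ∈ S) {s : ℝ} (hs₀ : 0 < s) (hs₁ : s ≤ 1) :
    ∃ x ∈ S, ‖g x - x‖ ≤ s * Metric.diam S := by
  set K : NNReal := ⟨1 - s, by linarith⟩
  set h : E → E := fun x => a + (K : ℝ) • (g x - a)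
  have hK : (K : ℝ) = 1 - s := rfl
  have hmaps : MapsTo h S S := fun x hx =>
    hconv.add_smul_sub_mem ha (hg hx) ⟨K.2, by rw [hK]; linarith⟩
  have hcontr : ContractingWith K (hmaps.restrict h S S) := by
    refine ⟨by rw [← NNReal.coe_lt_coe, hK]; push_cast; linarith, ?_⟩
    refine LipschitzWith.of_dist_le_mul fun x y => ?_
    have hxy : dist (g x) (g y) ≤ dist x y := by
      simpa [Subtype.dist_eq] using hlip.dist_le_mul x.1 x.2 y.1 y.2
    calc dist (h x) (h y) = K * dist (g x) (g y) := by
          simp only [h, dist_eq_norm, add_sub_add_left_eq_sub, ← smul_sub,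
            sub_sub_sub_cancel_right, norm_smul, NNReal.norm_eq]
      _ ≤ K * dist x y := by gcongr
  obtain ⟨x, hxS, hfix, -⟩ := hcontr.exists_fixedPoint' hc hmaps ha (edist_ne_top _ _)
  have hgx : g x - x = s • (g x - a) := by
    have hx : a + (1 - s) • (g x - a) = x := hfix
    calc g x - x = g x - (a + (1 - s) • (g x - a)) := by rw [hx]
      _ = s • (g x - a) := by module
  refine ⟨x, hxS, ?_⟩
  rw [hgx, norm_smul, Real.norm_of_nonneg hs₀.le, ← dist_eq_norm]
  gcongr
  exact Metric.dist_le_diam_of_mem hb (hg hxS) ha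

theorem IsCompact.exists_isFixedPt_of_lipschitzOnWith_one (hS : IsCompact S)
    (hconv : Convex ℝ S) (hne : S.Nonempty) (hg : MapsTo g S S) (hlip : LipschitzOnWith 1 g S) :
    ∃ x ∈ S, IsFixedPt g x := by
  obtain ⟨x, hxS, hmin⟩ := hS.exists_isMinOn hne (hlip.continuousOn.sub continuousOn_id).norm
  have hle : ∀ s ∈ Ioc (0 : ℝ) 1, ‖g x - x‖ ≤ s * Metric.diam S := fun s hs => by
    obtain ⟨y, hyS, hy⟩ := exists_norm_sub_le_mul_diam_of_lipschitzOnWith_one hS.isComplete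
      hS.isBounded hconv hg hlip hne.some_mem hs.1 hs.2
    exact (hmin hyS).trans hy
  have hlim : Tendsto (fun s : ℝ => s * Metric.diam S) (𝓝[>] 0) (𝓝 0) :=
    ((continuous_mul_const _).tendsto' 0 0 (zero_mul _)).mono_left nhdsWithin_le_nhds
  have hzero : ‖g x - x‖ ≤ 0 :=
    ge_of_tendsto hlim (eventually_of_mem (Ioc_mem_nhdsGT one_pos) hle)
  exact ⟨x, hxS, sub_eq_zero.1 (norm_le_zero_iff.1 hzero)⟩

end NonexpansiveFixedPoint

theorem lipschitzWith_inf_sup {α : Type*} [NormedAddCommGroup α] [Lattice α] [HasSolidNorm α]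
    [IsOrderedAddMonoid α] (lo hi : α) : LipschitzWith 1 fun x => x ⊓ hi ⊔ lo :=
  LipschitzWith.of_dist_le_mul fun x y => by
    rw [NNReal.coe_one, one_mul, dist_eq_norm, dist_eq_norm]
    exact (norm_sup_sub_sup_le_norm _ _ lo).trans (norm_inf_sub_inf_le_norm x y hi)

theorem norm_sub_inf_sup_le {ι : Type*} [Fintype ι] {lo hi y : ι → ℝ} {ε : ℝ} (hε : 0 ≤ ε)
    (hy : ∀ i, lo i - ε ≤ y i ∧ y i ≤ hi i + ε) : ‖y - y ⊓ hi ⊔ lo‖ ≤ ε :=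
  (pi_norm_le_iff_of_nonneg hε).2 fun i => by
    obtain ⟨hlo, hhi⟩ := hy i
    change |y i - max (min (y i) (hi i)) (lo i)| ≤ ε
    grind

theorem eps_fixed_point_exists_generalized_nonexpansive_general
    (m : ℕ) (α β : Fin m → ℝ) (hαβ : ∀ i, α i ≤ β i) (ε : ℝ) (hε : 0 ≤ ε)
    (f : (Fin m → ℝ) → (Fin m → ℝ))
    (hmap : ∀ x ∈ Set.Icc α β, ∀ i, α i - ε ≤ f x i ∧ f x i ≤ β i + ε)
    (hnonexp : ∀ x ∈ Set.Icc α β, ∀ y ∈ Set.Icc α β, ‖f x - f y‖ ≤ ‖x - y‖) :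
    ∃ x ∈ Set.Icc α β, ‖f x - x‖ ≤ ε := by
  have hf : LipschitzOnWith 1 f (Icc α β) := LipschitzOnWith.of_dist_le_mul fun x hx y hy => by
    simpa [dist_eq_norm] using hnonexp x hx y hy
  have hg : LipschitzOnWith 1 (fun x => f x ⊓ β ⊔ α) (Icc α β) :=
    mul_one (1 : NNReal) ▸ (lipschitzWith_inf_sup α β).comp_lipschitzOnWith hf
  have hmaps : MapsTo (fun x => f x ⊓ β ⊔ α) (Icc α β) (Icc α β) := fun x _ =>
    ⟨le_sup_right, sup_le inf_le_right hαβ⟩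
  obtain ⟨x, hx, hfix⟩ := isCompact_Icc.exists_isFixedPt_of_lipschitzOnWith_one
    (convex_Icc α β) (nonempty_Icc.2 hαβ) hmaps hg
  refine ⟨x, hx, ?_⟩
  calc ‖f x - x‖ = ‖f x - f x ⊓ β ⊔ α‖ := by rw [hfix.eq]
    _ ≤ ε := norm_sub_inf_sup_le hε (hmap x hx)

theorem eps_fixed_point_exists_generalized_nonexpansive
    (m : ℕ) (α β : Fin m → ℝ) (hαβ : ∀ i, α i ≤ β i) (ε : ℝ) (hε : 0 ≤ ε)
    (f : (Fin m → ℝ) → (Fin m → ℝ))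
    (hcont : ContinuousOn f (Set.Icc α β))
    (hmap : ∀ x ∈ Set.Icc α β, ∀ i, α i - ε ≤ f x i ∧ f x i ≤ β i + ε)
    (hnonexp : ∀ x ∈ Set.Icc α β, ∀ y ∈ Set.Icc α β, ‖f x - f y‖ ≤ ‖x - y‖) :
    ∃ x ∈ Set.Icc α β, ‖f x - x‖ ≤ ε :=
  eps_fixed_point_exists_generalized_nonexpansive_general m α β hαβ ε hε f hmap hnonexp
end

section
/- Let k ≥ 2, 0 < γ < 1, ε > 0, and f : [0,1]^k → [0,1]^k a (1-γ)-contraction under the ℓ₁-norm with fixed point x*. Suppose x ∈ [0,1]^k satisfies ‖f(x)-x‖₁ > ε and Σ_{j=3}^{k} |f(x)_j - x_j| ≤ εγ/4, and suppose |f(x)_1 - x_1| ≥ |f(x)_2 - x_2| and f(x)_1 > x_1. Then x*_1 > x_1 + εγ/8. -/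
/-!
Suppose `x*₀ ≤ x₀ + εγ/8` and compare `‖x - x*‖₁` with `‖f x - x*‖₁` coordinatewise. Coordinate `i`
gets closer to `x*` by at most `|f(x)ᵢ - xᵢ|`, so the coordinates `i ≥ 2` gain at most `εγ/4`
together and coordinate `1` at most `d = f(x)₀ - x₀`; as `x*₀` lies at most `εγ/8` above `x₀`,
coordinate `0` gains at most `εγ/4 - d`. So `‖x - x*‖₁ - ‖f x - x*‖₁ ≤ εγ/2`, whereas the
contraction makes this at least `γ‖x - x*‖₁ > γε/2`.
-/

open Finset

lemma abs_sub_sub_abs_sub_le_abs_sub (x y z : ℝ) : |x - z| - |y - z| ≤ |y - x| := by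
  simpa [abs_sub_comm x y] using abs_sub_abs_le_abs_sub (x - z) (y - z)

lemma abs_sub_sub_abs_sub_le_of_le_add {x y z δ : ℝ} (hδ : 0 ≤ δ) (hz : z ≤ x + δ) :
    |x - z| - |y - z| ≤ 2 * δ - (y - x) := by
  have hx : |x - z| - (x - z) ≤ 2 * δ := by cases abs_cases (x - z) <;> linarith
  linarith [le_abs_self (y - z)]

lemma half_lt_sum_abs_sub_of_lt {ι : Type*} [Fintype ι] {γ ε : ℝ} (hγ : 0 ≤ γ)
    {x y z : ι → ℝ} (hcontr : ∑ i, |y i - z i| ≤ (1 - γ) * ∑ i, |x i - z i|)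
    (hfar : ε < ∑ i, |y i - x i|) :
    ε / 2 < ∑ i, |x i - z i| := by
  have htri : ∑ i, |y i - x i| ≤ ∑ i, |y i - z i| + ∑ i, |x i - z i| := by
    rw [← sum_add_distrib]
    exact sum_le_sum fun i _ => (abs_sub_le _ (z i) _).trans_eq (by rw [abs_sub_comm (z i)])
  have hA : 0 ≤ ∑ i, |x i - z i| := sum_nonneg fun i _ => abs_nonneg _
  nlinarith

lemma Fin.sum_univ_eq_add_add_sum_filter_two_le {M : Type*} [AddCommMonoid M] {k : ℕ}
    (g : Fin (k + 2) → M) :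
    ∑ i, g i = g 0 + g 1 + ∑ j ∈ univ.filter (fun j : Fin (k + 2) => 2 ≤ (j : ℕ)), g j := by
  have hhead : univ.filter (fun j : Fin (k + 2) => ¬ 2 ≤ (j : ℕ)) = {0, 1} := by
    ext j
    simp only [mem_filter, mem_univ, true_and, mem_insert, mem_singleton, Fin.ext_iff,
      Fin.val_zero, Fin.val_one]
    omega
  rw [← sum_filter_not_add_sum_filter univ (fun j : Fin (k + 2) => 2 ≤ (j : ℕ)), hhead,
    sum_pair (by simp)]

lemma sum_abs_sub_sub_sum_abs_sub_le {k : ℕ} {x y z : Fin (k + 2) → ℝ} {δ τ : ℝ} (hδ : 0 ≤ δ)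
    (hz : z 0 ≤ x 0 + δ) (hdom : |y 1 - x 1| ≤ y 0 - x 0)
    (htail : ∑ j ∈ univ.filter (fun j : Fin (k + 2) => 2 ≤ (j : ℕ)), |y j - x j| ≤ τ) :
    ∑ i, |x i - z i| - ∑ i, |y i - z i| ≤ 2 * δ + τ := by
  rw [← sum_sub_distrib, Fin.sum_univ_eq_add_add_sum_filter_two_le]
  have h0 := abs_sub_sub_abs_sub_le_of_le_add (y := y 0) hδ hz
  have h1 := abs_sub_sub_abs_sub_le_abs_sub (x 1) (y 1) (z 1)
  have hrest := (sum_le_sum fun j _ => abs_sub_sub_abs_sub_le_abs_sub (x j) (y j) (z j)).trans htail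
  linarith

theorem weakly_dominating_coordinate_general
    (k : ℕ) (γ ε : ℝ) (hγ0 : 0 < γ) (hε : 0 < ε)
    (f : (Fin (k + 2) → ℝ) → (Fin (k + 2) → ℝ))
    (hcontr : ∀ x ∈ Set.Icc (0 : Fin (k + 2) → ℝ) 1, ∀ y ∈ Set.Icc (0 : Fin (k + 2) → ℝ) 1,
      ∑ i, |f x i - f y i| ≤ (1 - γ) * ∑ i, |x i - y i|)
    (xstar : Fin (k + 2) → ℝ) (hxstar : xstar ∈ Set.Icc (0 : Fin (k + 2) → ℝ) 1)
    (hfix : f xstar = xstar)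
    (x : Fin (k + 2) → ℝ) (hx : x ∈ Set.Icc (0 : Fin (k + 2) → ℝ) 1)
    (hfar : ∑ i, |f x i - x i| > ε)
    (htail : ∑ j ∈ Finset.univ.filter (fun j : Fin (k + 2) => 2 ≤ (j : ℕ)), |f x j - x j| ≤ ε * γ / 4)
    (hdom : |f x 0 - x 0| ≥ |f x 1 - x 1|)
    (hup : f x 0 > x 0) :
    xstar 0 > x 0 + ε * γ / 8 := by
  by_contra! hnear
  have hB : ∑ i, |f x i - xstar i| ≤ (1 - γ) * ∑ i, |x i - xstar i| := by
    simpa only [hfix] using hcontr x hx xstar hxstar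
  have hA := half_lt_sum_abs_sub_of_lt hγ0.le hB hfar
  rw [ge_iff_le, abs_of_pos (sub_pos.2 hup)] at hdom
  have hgain := sum_abs_sub_sub_sum_abs_sub_le (by positivity) hnear hdom htail
  nlinarith [mul_lt_mul_of_pos_left hA hγ0]

theorem weakly_dominating_coordinate
    (k : ℕ) (γ ε : ℝ) (hγ0 : 0 < γ) (hγ1 : γ < 1) (hε : 0 < ε)
    (f : (Fin (k + 2) → ℝ) → (Fin (k + 2) → ℝ))
    (hmap : ∀ x ∈ Set.Icc (0 : Fin (k + 2) → ℝ) 1, f x ∈ Set.Icc (0 : Fin (k + 2) → ℝ) 1)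
    (hcontr : ∀ x ∈ Set.Icc (0 : Fin (k + 2) → ℝ) 1, ∀ y ∈ Set.Icc (0 : Fin (k + 2) → ℝ) 1,
      ∑ i, |f x i - f y i| ≤ (1 - γ) * ∑ i, |x i - y i|)
    (xstar : Fin (k + 2) → ℝ) (hxstar : xstar ∈ Set.Icc (0 : Fin (k + 2) → ℝ) 1)
    (hfix : f xstar = xstar)
    (x : Fin (k + 2) → ℝ) (hx : x ∈ Set.Icc (0 : Fin (k + 2) → ℝ) 1)
    (hfar : ∑ i, |f x i - x i| > ε)
    (htail : ∑ j ∈ Finset.univ.filter (fun j : Fin (k + 2) => 2 ≤ (j : ℕ)), |f x j - x j| ≤ ε * γ / 4)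
    (hdom : |f x 0 - x 0| ≥ |f x 1 - x 1|)
    (hup : f x 0 > x 0) :
    xstar 0 > x 0 + ε * γ / 8 :=
  weakly_dominating_coordinate_general k γ ε hγ0 hε f hcontr xstar hxstar hfix x hx hfar htail hdom
    hup
end
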